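/- Let A be an n×r real matrix of full column rank, A_□ a dominant r×r submatrix of A, and A_◇ a maximal-volume r×r submatrix. Then |det(A_□)| ≥ |det(A_◇)| / r^{r/2}. -/

import Mathlib

open Matrix BigOperators Filter

theorem Matrix.isHermitian_transpose_mul_self {m n α : Type*} [Fintype m]
    [NonUnitalCommSemiring α] [StarRing α] [TrivialStar α] (A : Matrix m n α) :
    (Aᵀ * A).IsHermitian := by
  rw [IsHermitian, conjTranspose_eq_transpose_of_trivial, transpose_mul, transpose_transpose]

noncomputable def sval {m n : ℕ} (A : Matrix (Fin m) (Fin n) ℝ) (k : Fin n) : ℝ :=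
  Real.sqrt ((Matrix.isHermitian_transpose_mul_self A).eigenvalues
    (Tuple.sort (Matrix.isHermitian_transpose_mul_self A).eigenvalues (Fin.rev k)))

noncomputable def chebNorm {m n : ℕ} (A : Matrix (Fin m) (Fin n) ℝ) : ℝ :=
  ⨆ i, ⨆ j, |A i j|

noncomputable def frobNorm {m n : ℕ} (A : Matrix (Fin m) (Fin n) ℝ) : ℝ :=
  Real.sqrt (∑ i, ∑ j, (A i j) ^ 2)

/-! Writing `S = A_□`, every `r × r` row submatrix factors as `A_I = (A S⁻¹)_I S`, and the
entries of `(A S⁻¹)_I` are bounded by `1` in absolute value. Hadamard's inequality bounds the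
determinant of such a matrix by the product of its column norms, each at most `√r`, so
`|det A_I| ≤ r^{r/2} |det S|` for every choice of rows `I`, in particular for `I = ◇`. -/

namespace Matrix

variable {ι : Type*} {r : ℕ}

def IsDominant (A : Matrix ι (Fin r) ℝ) (I : Fin r → ι) : Prop :=
  ∀ i p, |(A * (A.submatrix I id)⁻¹) i p| ≤ 1

/-- Hadamard's inequality. -/
theorem abs_det_le_prod_norm_col (M : Matrix (Fin r) (Fin r) ℝ) :
    |M.det| ≤ ∏ j, ‖WithLp.toLp 2 (fun i => M i j)‖ := by
  have : Fact (Module.finrank ℝ (EuclideanSpace ℝ (Fin r)) = r) := ⟨finrank_euclideanSpace_fin⟩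
  set b := EuclideanSpace.basisFun (Fin r) ℝ
  have hdet : b.toBasis.det (fun j => WithLp.toLp 2 (fun i => M i j)) = M.det := by
    rw [Module.Basis.det_apply]
    rfl
  rw [← hdet, ← b.toBasis.orientation.volumeForm_robust' b]
  exact b.toBasis.orientation.abs_volumeForm_apply_le _

theorem abs_det_le_sqrt_card_pow_of_abs_le_one (M : Matrix (Fin r) (Fin r) ℝ)
    (hM : ∀ i j, |M i j| ≤ 1) : |M.det| ≤ Real.sqrt r ^ r := by
  have hcol : ∀ j, ‖WithLp.toLp 2 (fun i => M i j)‖ ≤ Real.sqrt r := fun j => by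
    rw [EuclideanSpace.norm_eq]
    refine Real.sqrt_le_sqrt ?_
    calc ∑ i, ‖M i j‖ ^ 2 ≤ ∑ _i : Fin r, (1 : ℝ) :=
          Finset.sum_le_sum fun i _ => pow_le_one₀ (norm_nonneg _) (hM i j)
      _ = r := by simp
  calc |M.det| ≤ ∏ j, ‖WithLp.toLp 2 (fun i => M i j)‖ := M.abs_det_le_prod_norm_col
    _ ≤ ∏ _j : Fin r, Real.sqrt r :=
        Finset.prod_le_prod (fun _ _ => norm_nonneg _) fun j _ => hcol j
    _ = Real.sqrt r ^ r := by simp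

theorem submatrix_mul_nonsing_inv_mul {R : Type*} [CommRing R] (A : Matrix ι (Fin r) R)
    {S : Matrix (Fin r) (Fin r) R} (hS : IsUnit S) (J : Fin r → ι) :
    (A * S⁻¹).submatrix J id * S = A.submatrix J id := by
  rw [submatrix_mul _ _ J id id Function.bijective_id, submatrix_id_id, Matrix.mul_assoc,
    nonsing_inv_mul _ ((isUnit_iff_isUnit_det S).mp hS), Matrix.mul_one]

theorem IsDominant.abs_det_submatrix_le {A : Matrix ι (Fin r) ℝ} {I : Fin r → ι}
    (hinv : IsUnit (A.submatrix I id)) (hdom : A.IsDominant I) (J : Fin r → ι) :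
    |(A.submatrix J id).det| ≤ Real.sqrt r ^ r * |(A.submatrix I id).det| := by
  rw [← A.submatrix_mul_nonsing_inv_mul hinv J, det_mul, abs_mul]
  exact mul_le_mul_of_nonneg_right
    (abs_det_le_sqrt_card_pow_of_abs_le_one _ fun i p => hdom (J i) p) (abs_nonneg _)

end Matrix

theorem stmt13_general {n r : ℕ} (A : Matrix (Fin n) (Fin r) ℝ)
    (Idom : Fin r → Fin n)
    (hinv : IsUnit (A.submatrix Idom id))
    (hdom : ∀ (i : Fin n) (p : Fin r), |(A * (A.submatrix Idom id)⁻¹) i p| ≤ 1)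
    (Imax : Fin r → Fin n) :
    |(A.submatrix Idom id).det| ≥ |(A.submatrix Imax id).det| / Real.sqrt r ^ r := by
  have hpos : 0 < Real.sqrt r ^ r := by
    rcases Nat.eq_zero_or_pos r with h0 | h0
    · simp [h0]
    · exact pow_pos (Real.sqrt_pos.mpr (by exact_mod_cast h0)) r
  rw [ge_iff_le, div_le_iff₀ hpos, mul_comm]
  exact IsDominant.abs_det_submatrix_le hinv hdom Imax

theorem stmt13 {n r : ℕ} (hr : r < n) (A : Matrix (Fin n) (Fin r) ℝ)
    (hrank : A.rank = r) (Idom : Fin r → Fin n) (hIdom : Function.Injective Idom)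
    (hinv : IsUnit (A.submatrix Idom id))
    (hdom : ∀ (i : Fin n) (p : Fin r), |(A * (A.submatrix Idom id)⁻¹) i p| ≤ 1)
    (Imax : Fin r → Fin n) (hImax : Function.Injective Imax)
    (hmax : ∀ I' : Fin r → Fin n, Function.Injective I' →
      |(A.submatrix I' id).det| ≤ |(A.submatrix Imax id).det|) :
    |(A.submatrix Idom id).det| ≥ |(A.submatrix Imax id).det| / Real.sqrt r ^ r :=
  stmt13_general A Idom hinv hdom Imax
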